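/- arXiv:2409.02063 — 2 statements merged into one kernel-verified Lean document; each statement's English description precedes it below -/
import Mathlib

section
/- For every natural number B ≥ 2, the permutation σ = A ∘ I of the 2B positions (apply the inter-bus layer I first, then the intra-bus layer A) fixes the position 2B−1 and acts on the remaining 2B−1 positions as a single cycle of length 2B−1; in particular, σ has order 2B−1, so the configuration of columns repeats after 2B−1 double-steps. -/
/-!
The transpositions inside each layer are disjoint, so `I` moves `x` to `x + 1` for odd
`x ≤ 2B - 3` and to `x - 1` for even `2 ≤ x ≤ 2B - 2`, while `A` does the same with the parities
exchanged on `x ≤ 2B - 3`. Hence `σ = A ∘ I` fixes `2B - 1` and runs through the orbit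
`0 → 1 → 3 → ⋯ → 2B - 3 → 2B - 2 → 2B - 4 → ⋯ → 2 → 0`, which contains every other position;
a cycle has order its length `2B - 1`.
-/

/-- The inter-bus layer `I` on the `2B` positions of the busNNN column model:
the product of the transpositions `(2j+1, 2j+2)` for `j = 0, …, B-2`. -/
def interLayer (B : ℕ) : Equiv.Perm (Fin (2 * B)) :=
  ((List.range (B - 1)).attach.map (fun j =>
    Equiv.swap ⟨2 * j.1 + 1, by have := List.mem_range.mp j.2; omega⟩
               ⟨2 * j.1 + 2, by have := List.mem_range.mp j.2; omega⟩)).prod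

/-- The intra-bus layer `A` on the `2B` positions of the busNNN column model:
the product of the transpositions `(2j, 2j+1)` for `j = 0, …, B-2`
(i.e. on every bus except the last). -/
def intraLayer (B : ℕ) : Equiv.Perm (Fin (2 * B)) :=
  ((List.range (B - 1)).attach.map (fun j =>
    Equiv.swap ⟨2 * j.1, by have := List.mem_range.mp j.2; omega⟩
               ⟨2 * j.1 + 1, by have := List.mem_range.mp j.2; omega⟩)).prod

open Equiv

/-- Swaps `2j + c` and `2j + c + 1`, or is the identity when these are out of range: `c = 1`
gives the transpositions of `interLayer`, `c = 0` those of `intraLayer`. -/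
def pairSwap (N c j : ℕ) : Perm (Fin N) :=
  if h : 2 * j + c + 1 < N then swap ⟨2 * j + c, by omega⟩ ⟨2 * j + c + 1, h⟩ else 1

lemma pairSwap_of_lt {N c j : ℕ} (h : 2 * j + c + 1 < N) :
    pairSwap N c j = swap ⟨2 * j + c, by omega⟩ ⟨2 * j + c + 1, h⟩ :=
  dif_pos h

lemma prod_pairSwap_apply_val {N c n : ℕ} (h : 2 * n + c ≤ N) (x : Fin N) :
    (((List.range n).map (pairSwap N c)).prod x : ℕ) =
      if c ≤ x ∧ (x : ℕ) < 2 * n + c then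
        if (x - c) % 2 = 0 then (x : ℕ) + 1 else x - 1
      else x := by
  induction n generalizing x with
  | zero => simp
  | succ n ih =>
    rw [List.range_succ, List.map_append, List.prod_append, List.map_singleton,
      List.prod_singleton, Perm.mul_apply, pairSwap_of_lt (by omega), swap_apply_def]
    split_ifs <;> rw [ih (by omega)] <;> simp only [Fin.ext_iff] at * <;> split_ifs <;> omega

lemma interLayer_eq (B : ℕ) :
    interLayer B = ((List.range (B - 1)).map (pairSwap (2 * B) 1)).prod := by
  rw [interLayer, ← List.attach_map_val (l := List.range (B - 1)) (f := pairSwap (2 * B) 1)]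
  congr 2
  funext ⟨j, hj⟩
  have := List.mem_range.mp hj
  exact (pairSwap_of_lt (N := 2 * B) (c := 1) (j := j) (by omega)).symm

lemma intraLayer_eq (B : ℕ) :
    intraLayer B = ((List.range (B - 1)).map (pairSwap (2 * B) 0)).prod := by
  rw [intraLayer, ← List.attach_map_val (l := List.range (B - 1)) (f := pairSwap (2 * B) 0)]
  congr 2
  funext ⟨j, hj⟩
  have := List.mem_range.mp hj
  exact (pairSwap_of_lt (N := 2 * B) (c := 0) (j := j) (by omega)).symm

section

variable {B : ℕ}

def doubleStepVal (B x : ℕ) : ℕ :=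
  if x = 2 * B - 1 then x
  else if x % 2 = 1 then min (x + 2) (2 * B - 2)
  else if x = 0 then 1 else x - 2

lemma intraLayer_mul_interLayer_apply_val (hB : 2 ≤ B) (x : Fin (2 * B)) :
    ((intraLayer B * interLayer B) x : ℕ) = doubleStepVal B x := by
  rw [Perm.mul_apply, intraLayer_eq, interLayer_eq, prod_pairSwap_apply_val (by omega),
    prod_pairSwap_apply_val (by omega), doubleStepVal]
  have := x.isLt
  split_ifs <;> omega

lemma intraLayer_mul_interLayer_apply_eq_self_iff (hB : 2 ≤ B) (x : Fin (2 * B)) :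
    (intraLayer B * interLayer B) x = x ↔ (x : ℕ) = 2 * B - 1 := by
  rw [Fin.ext_iff, intraLayer_mul_interLayer_apply_val hB, doubleStepVal]
  have := x.isLt
  split_ifs <;> omega

lemma support_intraLayer_mul_interLayer (hB : 2 ≤ B) :
    (intraLayer B * interLayer B).support =
      Finset.univ.erase ⟨2 * B - 1, Nat.sub_one_lt (by omega)⟩ := by
  ext x
  rw [Perm.mem_support, Ne, intraLayer_mul_interLayer_apply_eq_self_iff hB, Finset.mem_erase,
    Ne, Fin.ext_iff]
  simp

def orbitOfZero (B k : ℕ) : ℕ :=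
  if k = 0 then 0 else if k ≤ B - 1 then 2 * k - 1 else 2 * (2 * B - 1 - k)

lemma intraLayer_mul_interLayer_pow_apply_zero (hB : 2 ≤ B) {k : ℕ} (hk : k ≤ 2 * B - 2) :
    (((intraLayer B * interLayer B) ^ k) ⟨0, by omega⟩ : ℕ) = orbitOfZero B k := by
  induction k with
  | zero => rfl
  | succ k ih =>
    rw [pow_succ', Perm.mul_apply, intraLayer_mul_interLayer_apply_val hB, ih (by omega)]
    unfold doubleStepVal orbitOfZero
    split_ifs <;> first | contradiction | omega

lemma exists_orbitOfZero_eq (hB : 2 ≤ B) {y : ℕ} (hy : y < 2 * B - 1) :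
    ∃ k ≤ 2 * B - 2, orbitOfZero B k = y := by
  rcases Nat.even_or_odd y with ⟨m, rfl⟩ | ⟨m, rfl⟩
  · rcases m.eq_zero_or_pos with rfl | hm
    · exact ⟨0, by omega, rfl⟩
    · exact ⟨2 * B - 1 - m, by omega, by rw [orbitOfZero]; split_ifs <;> omega⟩
  · exact ⟨m + 1, by omega, by rw [orbitOfZero]; split_ifs <;> omega⟩

lemma isCycle_intraLayer_mul_interLayer (hB : 2 ≤ B) : (intraLayer B * interLayer B).IsCycle := by
  refine ⟨⟨0, by omega⟩, ?_, fun y hy => ?_⟩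
  · rw [Ne, intraLayer_mul_interLayer_apply_eq_self_iff hB]
    dsimp only
    omega
  · rw [Ne, intraLayer_mul_interLayer_apply_eq_self_iff hB] at hy
    obtain ⟨k, hk, hky⟩ := exists_orbitOfZero_eq hB (y := y) (by omega)
    exact ⟨k, Fin.ext <| by rw [zpow_natCast, intraLayer_mul_interLayer_pow_apply_zero hB hk, hky]⟩

end

/-- For every `B ≥ 2`, the double-step permutation `σ = A ∘ I`
(apply `I` first, then `A`) fixes position `2B - 1` and acts on the remaining
`2B - 1` positions as a single cycle of length `2B - 1`; in particular `σ` has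
order `2B - 1`. -/
theorem busNNN_double_step_cycle (B : ℕ) (hB : 2 ≤ B) :
    (intraLayer B * interLayer B) ⟨2 * B - 1, by omega⟩ = ⟨2 * B - 1, by omega⟩ ∧
    (intraLayer B * interLayer B).IsCycle ∧
    (intraLayer B * interLayer B).support = Finset.univ.erase ⟨2 * B - 1, by omega⟩ ∧
    orderOf (intraLayer B * interLayer B) = 2 * B - 1 := by
  have hcycle := isCycle_intraLayer_mul_interLayer hB
  have hsupport := support_intraLayer_mul_interLayer hB
  refine ⟨(intraLayer_mul_interLayer_apply_eq_self_iff hB _).2 rfl, hcycle, hsupport, ?_⟩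
  rw [hcycle.orderOf, hsupport, Finset.card_erase_of_mem (Finset.mem_univ _), Finset.card_univ,
    Fintype.card_fin]
end

section
/- For every natural number B ≥ 2, the busNNN double-step permutation σ = A ∘ I achieves full connectivity between columns within 2B−1 double-steps: for every pair of distinct columns a ≠ b in {0,…,2B−1} there exist t ∈ {0,…,2B−2} and a bus j ∈ {0,…,B−1} such that {σ^t(a), σ^t(b)} = {2j, 2j+1}. -/
/-- The positions `x` and `y` together occupy bus `j`, i.e. `{x, y} = {2j, 2j+1}`. -/
def OnBus (B j : ℕ) (x y : Fin (2 * B)) : Prop :=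
  (x.1 = 2 * j ∧ y.1 = 2 * j + 1) ∨ (x.1 = 2 * j + 1 ∧ y.1 = 2 * j)


/-!
Off the fixed column `2B - 1`, the double step `σ` is one `(2B - 1)`-cycle
`0 → 1 → 3 → ⋯ → 2B - 3 → 2B - 2 → 2B - 4 → ⋯ → 2 → 0`. Numbering its columns by
`ZMod (2B - 1)` via `2j ↦ -j`, `2j + 1 ↦ j + 1` turns `σ` into `+ 1`, so `σᵗ` preserves the
difference of the indices of two columns. Bus `j < B - 1` holds the indices `-j` and `j + 1`,
at distance `2j + 1`, and `±1, ±3, …, ±(2B - 3)` are all the nonzero residues mod `2B - 1`: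
each pair of cycling columns is brought onto a bus within one period. The fixed column meets
every other column on the last bus, when that column reaches `2B - 2`.
-/

def finSwap (m a b : ℕ) : Equiv.Perm (Fin m) :=
  if h : a < m ∧ b < m then Equiv.swap ⟨a, h.1⟩ ⟨b, h.2⟩ else 1

lemma finSwap_apply_val {m a b : ℕ} (ha : a < m) (hb : b < m) (x : Fin m) :
    (finSwap m a b x).1 = if x.1 = a then b else if x.1 = b then a else x.1 := by
  simp only [finSwap, dif_pos (And.intro ha hb), Equiv.swap_apply_def]
  split_ifs <;> simp_all [Fin.ext_iff]

lemma prod_finSwap_apply_val {m c n : ℕ} (hn : 2 * n + c ≤ m) (x : Fin m) :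
    (((List.range n).map fun j => finSwap m (2 * j + c) (2 * j + c + 1)).prod x).1 =
      if c ≤ x.1 ∧ x.1 < 2 * n + c then
        (if (x.1 - c) % 2 = 0 then x.1 + 1 else x.1 - 1)
      else x.1 := by
  induction n generalizing x with
  | zero => simp
  | succ n ih =>
    rw [List.range_succ, List.map_append, List.prod_append, List.map_singleton,
      List.prod_singleton, Equiv.Perm.mul_apply, ih (by omega),
      finSwap_apply_val (by omega) (by omega)]
    split_ifs <;> omega

lemma interLayer_apply_val (B : ℕ) (x : Fin (2 * B)) :
    (interLayer B x).1 =
      if 1 ≤ x.1 ∧ x.1 < 2 * B - 1 then (if x.1 % 2 = 1 then x.1 + 1 else x.1 - 1) else x.1 := by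
  have hprod : interLayer B =
      ((List.range (B - 1)).map fun j => finSwap (2 * B) (2 * j + 1) (2 * j + 1 + 1)).prod := by
    rw [interLayer, ← List.attach_map_val (l := List.range (B - 1))]
    congr 1
    refine List.map_congr_left fun j _ => ?_
    have := List.mem_range.mp j.2
    simp only [finSwap, dif_pos (show 2 * j.1 + 1 < 2 * B ∧ 2 * j.1 + 1 + 1 < 2 * B by omega)]
  have := x.2
  rw [hprod, prod_finSwap_apply_val (n := B - 1) (by omega)]
  split_ifs <;> omega

lemma intraLayer_apply_val (B : ℕ) (x : Fin (2 * B)) :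
    (intraLayer B x).1 =
      if x.1 < 2 * B - 2 then (if x.1 % 2 = 0 then x.1 + 1 else x.1 - 1) else x.1 := by
  have hprod : intraLayer B =
      ((List.range (B - 1)).map fun j => finSwap (2 * B) (2 * j + 0) (2 * j + 0 + 1)).prod := by
    rw [intraLayer, ← List.attach_map_val (l := List.range (B - 1))]
    congr 1
    refine List.map_congr_left fun j _ => ?_
    have := List.mem_range.mp j.2
    simp only [finSwap, dif_pos (show 2 * j.1 + 0 < 2 * B ∧ 2 * j.1 + 0 + 1 < 2 * B by omega)]
    rfl
  have := x.2
  rw [hprod, prod_finSwap_apply_val (n := B - 1) (by omega)]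
  split_ifs <;> omega

lemma doubleStep_apply_val {B : ℕ} (hB : 2 ≤ B) (x : Fin (2 * B)) :
    ((intraLayer B * interLayer B) x).1 =
      if x.1 = 0 then 1
      else if x.1 = 2 * B - 3 then 2 * B - 2
      else if x.1 = 2 * B - 1 then x.1
      else if x.1 % 2 = 1 then x.1 + 2 else x.1 - 2 := by
  rw [Equiv.Perm.mul_apply, intraLayer_apply_val, interLayer_apply_val]
  have := x.2
  split_ifs <;> omega

lemma doubleStep_apply_of_val_eq {B : ℕ} (x : Fin (2 * B)) (hx : x.1 = 2 * B - 1) :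
    (intraLayer B * interLayer B) x = x := by
  ext
  rw [Equiv.Perm.mul_apply, intraLayer_apply_val, interLayer_apply_val]
  split_ifs <;> omega

def cycleIndex (B p : ℕ) : ZMod (2 * B - 1) :=
  if p % 2 = 0 then -((p / 2 : ℕ) : ZMod (2 * B - 1)) else ((p / 2 + 1 : ℕ) : ZMod (2 * B - 1))

@[simp]
lemma cycleIndex_two_mul (B j : ℕ) : cycleIndex B (2 * j) = -(j : ZMod (2 * B - 1)) := by
  simp [cycleIndex]

@[simp]
lemma cycleIndex_two_mul_add_one (B j : ℕ) :
    cycleIndex B (2 * j + 1) = (j : ZMod (2 * B - 1)) + 1 := by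
  simp [cycleIndex, Nat.add_mod, Nat.add_div]

lemma eq_of_natCast_eq_of_lt {n a b : ℕ} (ha : a < n) (hb : b < n)
    (h : (a : ZMod n) = b) : a = b := by
  rw [← ZMod.val_natCast_of_lt ha, h, ZMod.val_natCast_of_lt hb]

lemma eq_of_cycleIndex_eq {B p q : ℕ} (hp : p < 2 * B - 1) (hq : q < 2 * B - 1)
    (h : cycleIndex B p = cycleIndex B q) : p = q := by
  obtain ⟨i, rfl | rfl⟩ := Nat.even_or_odd' p <;> obtain ⟨k, rfl | rfl⟩ := Nat.even_or_odd' q <;>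
    simp only [cycleIndex_two_mul, cycleIndex_two_mul_add_one] at h
  · rw [neg_inj] at h
    rw [eq_of_natCast_eq_of_lt (by omega) (by omega) h]
  · have : ((i + k + 1 : ℕ) : ZMod (2 * B - 1)) = 0 := by push_cast; linear_combination -h
    have := eq_of_natCast_eq_of_lt (by omega) (by omega) (this.trans Nat.cast_zero.symm)
    omega
  · have : ((i + k + 1 : ℕ) : ZMod (2 * B - 1)) = 0 := by push_cast; linear_combination h
    have := eq_of_natCast_eq_of_lt (by omega) (by omega) (this.trans Nat.cast_zero.symm)
    omega
  · rw [add_left_inj] at h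
    rw [eq_of_natCast_eq_of_lt (by omega) (by omega) h]

lemma cycleIndex_doubleStep {B : ℕ} (hB : 2 ≤ B) (x : Fin (2 * B)) (hx : x.1 < 2 * B - 1) :
    cycleIndex B ((intraLayer B * interLayer B) x).1 = cycleIndex B x.1 + 1 := by
  have hσ := doubleStep_apply_val hB x
  obtain ⟨j, hj | hj⟩ := Nat.even_or_odd' x.1 <;> rw [hj]
  · rcases j with _ | j
    · rw [show ((intraLayer B * interLayer B) x).1 = 2 * 0 + 1 by split_ifs at hσ <;> omega,
        cycleIndex_two_mul, cycleIndex_two_mul_add_one]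
      simp
    · rw [show ((intraLayer B * interLayer B) x).1 = 2 * j by split_ifs at hσ <;> omega]
      simp only [cycleIndex_two_mul]
      push_cast
      ring
  · by_cases hjB : j + 2 < B
    · rw [show ((intraLayer B * interLayer B) x).1 = 2 * (j + 1) + 1 by
        split_ifs at hσ <;> omega]
      simp only [cycleIndex_two_mul_add_one]
      push_cast
      ring
    · rw [show ((intraLayer B * interLayer B) x).1 = 2 * (j + 1) by split_ifs at hσ <;> omega]
      have hcycle : ((2 * j + 3 : ℕ) : ZMod (2 * B - 1)) = 0 := by
        rw [show 2 * j + 3 = 2 * B - 1 by omega, ZMod.natCast_self]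
      simp only [cycleIndex_two_mul, cycleIndex_two_mul_add_one]
      push_cast at hcycle ⊢
      linear_combination -hcycle

lemma doubleStep_pow_apply {B : ℕ} (hB : 2 ≤ B) (x : Fin (2 * B)) (hx : x.1 < 2 * B - 1) (t : ℕ) :
    ((((intraLayer B * interLayer B) ^ t) x).1 < 2 * B - 1) ∧
      cycleIndex B (((intraLayer B * interLayer B) ^ t) x).1 = cycleIndex B x.1 + t := by
  induction t with
  | zero => simpa using hx
  | succ t ih =>
    rw [pow_succ', Equiv.Perm.mul_apply, cycleIndex_doubleStep hB _ ih.1, ih.2, Nat.cast_succ,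
      add_assoc]
    refine ⟨?_, rfl⟩
    rw [doubleStep_apply_val hB]
    have := ih.1
    split_ifs <;> omega

lemma exists_pow_cycleIndex_eq {B : ℕ} (hB : 2 ≤ B) (x : Fin (2 * B)) (hx : x.1 < 2 * B - 1)
    (r : ZMod (2 * B - 1)) :
    ∃ t ≤ 2 * B - 2, (((intraLayer B * interLayer B) ^ t) x).1 < 2 * B - 1 ∧
      cycleIndex B (((intraLayer B * interLayer B) ^ t) x).1 = r := by
  have : NeZero (2 * B - 1) := ⟨by omega⟩
  refine ⟨(r - cycleIndex B x.1).val, ?_, doubleStep_pow_apply hB x hx _ |>.1, ?_⟩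
  · have := ZMod.val_lt (r - cycleIndex B x.1)
    omega
  · rw [(doubleStep_pow_apply hB x hx _).2, ZMod.natCast_zmod_val]
    ring

lemma OnBus.symm {B j : ℕ} {x y : Fin (2 * B)} (h : OnBus B j x y) : OnBus B j y x :=
  Or.imp And.symm And.symm (Or.symm h)

lemma exists_onBus_of_cycleIndex_sub {B : ℕ} (hB : 2 ≤ B) {x y : Fin (2 * B)}
    (hx : x.1 < 2 * B - 1) (hy : y.1 < 2 * B - 1) {j : ℕ} (hj : j + 1 < B)
    (hxy : cycleIndex B y.1 - cycleIndex B x.1 = 2 * j + 1) :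
    ∃ t ≤ 2 * B - 2, OnBus B j (((intraLayer B * interLayer B) ^ t) x)
      (((intraLayer B * interLayer B) ^ t) y) := by
  obtain ⟨t, ht, htx, hxt⟩ := exists_pow_cycleIndex_eq hB x hx (cycleIndex B (2 * j))
  obtain ⟨hty, hyt⟩ := doubleStep_pow_apply hB y hy t
  refine ⟨t, ht, Or.inl ⟨eq_of_cycleIndex_eq htx (by omega) hxt, eq_of_cycleIndex_eq hty (by omega) ?_⟩⟩
  rw [(doubleStep_pow_apply hB x hx t).2] at hxt
  rw [hyt, cycleIndex_two_mul_add_one]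
  rw [cycleIndex_two_mul] at hxt
  linear_combination hxy + hxt

lemma exists_onBus_of_val_eq {B : ℕ} (hB : 2 ≤ B) {x y : Fin (2 * B)}
    (hx : x.1 = 2 * B - 1) (hy : y.1 < 2 * B - 1) :
    ∃ t ≤ 2 * B - 2, OnBus B (B - 1) (((intraLayer B * interLayer B) ^ t) x)
      (((intraLayer B * interLayer B) ^ t) y) := by
  obtain ⟨t, ht, hty, hyt⟩ := exists_pow_cycleIndex_eq hB y hy (cycleIndex B (2 * (B - 1)))
  refine ⟨t, ht, Or.inr ⟨?_, ?_⟩⟩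
  · rw [Equiv.Perm.pow_apply_eq_self_of_apply_eq_self (doubleStep_apply_of_val_eq x hx)]
    omega
  · exact eq_of_cycleIndex_eq hty (by omega) hyt

lemma exists_odd_eq_or_eq_neg {n : ℕ} (hn : Odd n) {δ : ZMod n} (hδ : δ ≠ 0) :
    ∃ j : ℕ, 2 * j + 1 < n ∧ (δ = 2 * j + 1 ∨ δ = -(2 * j + 1)) := by
  have : NeZero n := ⟨hn.pos.ne'⟩
  have hpos : 0 < δ.val := (ZMod.val_pos).mpr hδ
  have hlt := ZMod.val_lt δ
  obtain ⟨j, hj | hj⟩ := Nat.even_or_odd' δ.val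
  · obtain ⟨m, rfl⟩ := hn
    refine ⟨m - j, by omega, Or.inr ?_⟩
    have hsum : ((2 * (m - j) + 1 + δ.val : ℕ) : ZMod (2 * m + 1)) = 0 := by
      rw [show 2 * (m - j) + 1 + δ.val = 2 * m + 1 by omega, ZMod.natCast_self]
    push_cast [ZMod.natCast_zmod_val] at hsum
    linear_combination hsum
  · refine ⟨j, by omega, Or.inl ?_⟩
    rw [← ZMod.natCast_zmod_val δ, hj]
    push_cast
    ring

/-- For every `B ≥ 2`, the busNNN double-step permutation
`σ = A ∘ I` achieves full connectivity within `2B - 1` double-steps: for every pair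
of distinct columns `a ≠ b` there are `t ∈ {0, …, 2B-2}` and a bus `j < B` with
`{σᵗ a, σᵗ b} = {2j, 2j+1}`. -/
theorem busNNN_double_step_full_connectivity (B : ℕ) (hB : 2 ≤ B) :
    ∀ a b : Fin (2 * B), a ≠ b → ∃ t ≤ 2 * B - 2, ∃ j < B,
      OnBus B j (((intraLayer B * interLayer B) ^ t) a)
        (((intraLayer B * interLayer B) ^ t) b) := by
  intro a b hab
  have ha := a.2
  have hb := b.2
  rcases Nat.lt_or_ge a.1 (2 * B - 1) with ha' | ha' <;>
    rcases Nat.lt_or_ge b.1 (2 * B - 1) with hb' | hb'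
  · have hδ : cycleIndex B b.1 - cycleIndex B a.1 ≠ 0 :=
      sub_ne_zero.mpr fun h => hab (Fin.ext (eq_of_cycleIndex_eq ha' hb' h.symm))
    obtain ⟨j, hj, hδj | hδj⟩ := exists_odd_eq_or_eq_neg ⟨B - 1, by omega⟩ hδ
    · obtain ⟨t, ht, hbus⟩ := exists_onBus_of_cycleIndex_sub hB ha' hb' (by omega) hδj
      exact ⟨t, ht, j, by omega, hbus⟩
    · obtain ⟨t, ht, hbus⟩ := exists_onBus_of_cycleIndex_sub hB hb' ha' (j := j) (by omega)
        (by rw [← neg_sub, hδj, neg_neg])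
      exact ⟨t, ht, j, by omega, hbus.symm⟩
  · obtain ⟨t, ht, hbus⟩ := exists_onBus_of_val_eq hB (x := b) (by omega) ha'
    exact ⟨t, ht, B - 1, by omega, hbus.symm⟩
  · obtain ⟨t, ht, hbus⟩ := exists_onBus_of_val_eq hB (x := a) (by omega) hb'
    exact ⟨t, ht, B - 1, by omega, hbus⟩
  · exact absurd (Fin.ext (by omega)) hab
end
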